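/- In the tree setting, for every 1 < p < ∞ the operator T is bounded on L^p(Ω) with ‖Tf‖_{L^p(Ω)} ≤ 2·(pN/(p−1))^{1/p}·‖f‖_{L^p(Ω)} for every f ∈ L^p(Ω). -/

import Mathlib

open MeasureTheory Filter Topology Metric Set

noncomputable section

abbrev Euc (n : ℕ) := EuclideanSpace ℝ (Fin n)

/-- `s ⪯ t`: `s` lies on the path from `t` to the root, i.e. `s` is obtained from `t`
by iterating the parent map. -/
def TreeLE {Γ : Type*} (par : Γ → Γ) (s t : Γ) : Prop := ∃ k : ℕ, par^[k] t = s

/-- `W_t = ⋃_{s ⪰ t} Ω_s` -/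
def Wset {n : ℕ} {Γ : Type*} (par : Γ → Γ) (Ωf : Γ → Set (Euc n)) (t : Γ) : Set (Euc n) :=
  ⋃ s ∈ {s | TreeLE par t s}, Ωf s

/-- The operator `Tf(x) = Σ_{a ≠ t ∈ Γ} (χ_t(x)/|W_t|) ∫_{W_t} |f|`. -/
def Tree_T {n : ℕ} {Γ : Type*} (a : Γ) (par : Γ → Γ) (Ωf : Γ → Set (Euc n))
    (Bset : Γ → Set (Euc n)) (f : Euc n → ℝ) (x : Euc n) : ℝ :=
  ∑' t : {t : Γ // t ≠ a},
    Set.indicator (Bset t.1) (fun _ => (1:ℝ)) x / (volume (Wset par Ωf t.1)).toReal *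
      ∫ y in Wset par Ωf t.1, |f y|

/-!
On `B_t` the operator `T` takes the value `c_t = ⨍_{W_t} |f|`, and it vanishes off `⋃ B_t`.
Fix `l > 0`. The nodes `u` with `c_u > l` that are minimal for `⪯` have pairwise disjoint subtrees,
so their sets `W_u` overlap at most `N` times, and every node with `c_t > l` lies above one of them,
so `{|Tf| > l} ⊆ ⋃ W_u`. Since `|W_u| ≤ (2 / l) ∫_{W_u ∩ {|f| > l/2}} |f|`, this gives the
weak-type bound `|{|Tf| > l}| ≤ (2N / l) ∫_{|f| > l/2} |f|`. Integrating it against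
`p l^(p-1) dl` (layer-cake formula) yields `∫ |Tf|^p ≤ 2^p p N / (p - 1) ∫ |f|^p`.
-/

open Function
open scoped ENNReal

namespace TreeLE

variable {Γ : Type*} {par : Γ → Γ}

theorem refl (t : Γ) : TreeLE par t t := ⟨0, rfl⟩

theorem trans {s t u : Γ} (hst : TreeLE par s t) (htu : TreeLE par t u) : TreeLE par s u := by
  obtain ⟨i, rfl⟩ := hst
  obtain ⟨j, rfl⟩ := htu
  exact ⟨i + j, iterate_add_apply par i j u⟩

theorem total_of_le {s u v : Γ} (hu : TreeLE par u s) (hv : TreeLE par v s) :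
    TreeLE par u v ∨ TreeLE par v u := by
  obtain ⟨i, rfl⟩ := hu
  obtain ⟨j, rfl⟩ := hv
  rcases le_total i j with h | h
  · exact .inr ⟨j - i, by rw [← iterate_add_apply, Nat.sub_add_cancel h]⟩
  · exact .inl ⟨i - j, by rw [← iterate_add_apply, Nat.sub_add_cancel h]⟩

/-- The highest ancestor of `t` in `S` below the root is minimal in `S`: any strictly higher
element of `S` on the branch of `t` would have to pass through the root. -/
theorem exists_minimal_le {a t : Γ} (hat : TreeLE par a t) {S : Set Γ}
    (hS : ∀ s ∈ S, ¬TreeLE par s a) (ht : t ∈ S) :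
    ∃ u ∈ S, TreeLE par u t ∧ ∀ v ∈ S, TreeLE par v u → v = u := by
  classical
  obtain ⟨k₀, hk₀⟩ := hat
  set k := Nat.findGreatest (fun k => par^[k] t ∈ S) k₀
  have hk : par^[k] t ∈ S := Nat.findGreatest_spec (P := fun k => par^[k] t ∈ S) k₀.zero_le ht
  refine ⟨_, hk, ⟨k, rfl⟩, ?_⟩
  rintro v hv ⟨m, rfl⟩
  rw [← iterate_add_apply] at hv ⊢
  by_cases hm : m + k ≤ k₀
  · obtain rfl : m = 0 := by
      have := Nat.le_findGreatest (P := fun k => par^[k] t ∈ S) hm hv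
      omega
    simp
  · refine absurd ⟨m + k - k₀, ?_⟩ (hS _ hv)
    rw [← hk₀, ← iterate_add_apply, Nat.sub_add_cancel (by omega)]

theorem exists_subset_pairwiseDisjoint_subtrees {a : Γ} (hreach : ∀ t, TreeLE par a t)
    (S : Set Γ) :
    ∃ U ⊆ S, (∀ t ∈ S, ∃ u ∈ U, TreeLE par u t) ∧
      U.PairwiseDisjoint fun u => {s | TreeLE par u s} := by
  by_cases hcyc : ∃ u ∈ S, TreeLE par u a
  · obtain ⟨u, hu, hua⟩ := hcyc
    exact ⟨{u}, singleton_subset_iff.2 hu, fun t _ => ⟨u, rfl, hua.trans (hreach t)⟩,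
      pairwiseDisjoint_singleton _ _⟩
  push Not at hcyc
  refine ⟨{u ∈ S | ∀ v ∈ S, TreeLE par v u → v = u}, sep_subset _ _, fun t ht => ?_, ?_⟩
  · obtain ⟨u, hu, hut, hmin⟩ := exists_minimal_le (hreach t) hcyc ht
    exact ⟨u, ⟨hu, hmin⟩, hut⟩
  · rintro u ⟨hu, humin⟩ u' ⟨hu', hu'min⟩ hne
    refine Set.disjoint_left.2 fun s hus hu's => hne ?_
    rcases total_of_le hus hu's with h | h
    · exact hu'min u hu h
    · exact (humin u' hu' h).symm

end TreeLE

section DisjointIndicator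

variable {ι β M : Type*} [AddCommMonoid M] [TopologicalSpace M] {s : ι → Set β}

theorem hasSum_indicator_of_mem (hs : Pairwise (Disjoint on s)) (c : ι → M) {i : ι} {x : β}
    (hx : x ∈ s i) : HasSum (fun j => (s j).indicator (fun _ => c j) x) (c i) := by
  convert hasSum_single (f := fun j => (s j).indicator (fun _ => c j) x) i
    fun j hj => indicator_of_notMem (disjoint_left.1 (hs hj.symm) hx) _
  simp [hx]

theorem summable_indicator_of_pairwiseDisjoint (hs : Pairwise (Disjoint on s)) (c : ι → M)
    (x : β) : Summable fun j => (s j).indicator (fun _ => c j) x := by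
  by_cases h : ∃ i, x ∈ s i
  · obtain ⟨i, hi⟩ := h
    exact (hasSum_indicator_of_mem hs c hi).summable
  · push Not at h
    simp [h]

theorem tsum_indicator_one_le_ofReal {ι β : Type*} {s : ι → Set β} {x : β} {N : ℝ}
    (h1 : 1 ≤ ∑' i, (s i).indicator (fun _ => (1 : ℝ)) x)
    (hN : ∑' i, (s i).indicator (fun _ => (1 : ℝ)) x ≤ N) :
    ∑' i, (s i).indicator (1 : β → ℝ≥0∞) x ≤ ENNReal.ofReal N := by
  have hsum : Summable fun i => (s i).indicator (fun _ => (1 : ℝ)) x := by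
    by_contra h
    rw [tsum_eq_zero_of_not_summable h] at h1
    exact absurd h1 (by norm_num)
  calc ∑' i, (s i).indicator (1 : β → ℝ≥0∞) x
      = ENNReal.ofReal (∑' i, (s i).indicator (fun _ => (1 : ℝ)) x) := by
        rw [ENNReal.ofReal_tsum_of_nonneg (fun i => indicator_nonneg (fun _ _ => zero_le_one) x)
          hsum]
        exact tsum_congr fun i => by by_cases hx : x ∈ s i <;> simp [hx]
    _ ≤ ENNReal.ofReal N := ENNReal.ofReal_le_ofReal hN

end DisjointIndicator

section MeasureLemmas

variable {α : Type*} [MeasurableSpace α] {μ : Measure α}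

theorem lintegral_Ioo_ofReal_rpow {q : ℝ} (hq : -1 < q) {c : ℝ} (hc : 0 ≤ c) :
    ∫⁻ l in Ioo 0 c, ENNReal.ofReal (l ^ q) = ENNReal.ofReal (c ^ (q + 1) / (q + 1)) := by
  have hint := (intervalIntegrable_iff_integrableOn_Ioc_of_le hc).1
    (intervalIntegral.intervalIntegrable_rpow' (a := 0) (b := c) hq)
  rw [Measure.restrict_congr_set Ioo_ae_eq_Ioc, ← ofReal_integral_eq_lintegral_ofReal hint
    ((ae_restrict_mem measurableSet_Ioc).mono fun l hl => Real.rpow_nonneg hl.1.le q),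
    ← intervalIntegral.integral_of_le hc, integral_rpow (.inl hq), Real.zero_rpow (by linarith),
    sub_zero]

theorem measurable_tsum_of_summable {ι : Type*} [Countable ι] {F : ι → α → ℝ}
    (hF : ∀ i, Measurable (F i)) (hsum : ∀ x, Summable fun i => F i x) :
    Measurable fun x => ∑' i, F i x :=
  measurable_of_tendsto_metrizable' (f := fun s x => ∑ i ∈ s, F i x) atTop
    (fun s => Finset.measurable_sum s fun i _ => hF i) (tendsto_pi_nhds.2 fun x => (hsum x).hasSum)

theorem tsum_setLIntegral_le_of_tsum_indicator_le {ι : Type*} [Countable ι] {s : ι → Set α}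
    (hs : ∀ i, MeasurableSet (s i)) {A : α → ℝ≥0∞} (hA : AEMeasurable A μ) {C : ℝ≥0∞}
    (hC : ∀ᵐ x ∂μ, ∑' i, (s i).indicator 1 x ≤ C) :
    ∑' i, ∫⁻ x in s i, A x ∂μ ≤ C * ∫⁻ x, A x ∂μ :=
  calc ∑' i, ∫⁻ x in s i, A x ∂μ = ∑' i, ∫⁻ x, (s i).indicator 1 x * A x ∂μ := by
        refine tsum_congr fun i => ?_
        rw [← lintegral_indicator (hs i)]
        exact lintegral_congr fun x => by by_cases hx : x ∈ s i <;> simp [hx]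
    _ = ∫⁻ x, (∑' i, (s i).indicator 1 x) * A x ∂μ := by
        rw [← lintegral_tsum (f := fun i x => (s i).indicator 1 x * A x)
          fun i => (measurable_one.indicator (hs i)).aemeasurable.mul hA]
        simp_rw [ENNReal.tsum_mul_right]
    _ ≤ ∫⁻ x, C * A x ∂μ := lintegral_mono_ae (hC.mono fun x hx => mul_le_mul_left hx _)
    _ = C * ∫⁻ x, A x ∂μ := lintegral_const_mul'' C hA

/-- `∫_s |f| ≤ (l / 2) μ s + ∫_{s ∩ {|f| > l / 2}} |f|`, and the left side exceeds `l μ s`. -/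
theorem measure_le_of_lt_setAverage_abs {s : Set α} {f : α → ℝ} {l : ℝ} (hl : 0 < l)
    (h : l < ⨍ x in s, |f x| ∂μ) :
    μ s ≤ ENNReal.ofReal (2 / l) *
      ∫⁻ x in s, {y | l < 2 * |f y|}.indicator (fun y => ENNReal.ofReal |f y|) x ∂μ := by
  set A := {y | l < 2 * |f y|}.indicator (fun y => ENNReal.ofReal |f y|)
  rw [setAverage_eq, smul_eq_mul] at h
  have hv : 0 < μ.real s := by
    refine measureReal_nonneg.lt_of_ne fun hv => ?_
    rw [← hv, inv_zero, zero_mul] at h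
    exact hl.not_gt h
  have hfin : μ s ≠ ∞ := (ENNReal.toReal_pos_iff.1 hv).2.ne
  have hsplit : ∀ y, ENNReal.ofReal |f y| ≤ ENNReal.ofReal (l / 2) + A y := by
    intro y
    by_cases hy : l < 2 * |f y|
    · simp [A, hy]
    · rw [show A y = 0 from indicator_of_notMem (show y ∉ {y | l < 2 * |f y|} from hy) _, add_zero]
      exact ENNReal.ofReal_le_ofReal (by linarith)
  have hI : 0 ≤ ∫ x in s, |f x| ∂μ := integral_nonneg fun x => abs_nonneg (f x)
  have hdouble : ENNReal.ofReal (l / 2) * μ s + ENNReal.ofReal (l / 2) * μ s ≤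
      ENNReal.ofReal (l / 2) * μ s + ∫⁻ x in s, A x ∂μ :=
    calc ENNReal.ofReal (l / 2) * μ s + ENNReal.ofReal (l / 2) * μ s
        = ENNReal.ofReal (l * μ.real s) := by
          rw [← add_mul, ← ENNReal.ofReal_add (by positivity) (by positivity), add_halves,
            ENNReal.ofReal_mul hl.le, ofReal_measureReal hfin]
      _ ≤ ENNReal.ofReal (∫ x in s, |f x| ∂μ) :=
          ENNReal.ofReal_le_ofReal (by nlinarith [(lt_inv_mul_iff₀ hv).1 h])
      _ ≤ ∫⁻ x in s, ENNReal.ofReal |f x| ∂μ := by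
          simpa only [Real.enorm_eq_ofReal_abs, abs_abs, abs_of_nonneg hI]
            using enorm_integral_le_lintegral_enorm (μ := μ.restrict s) fun x => |f x|
      _ ≤ ∫⁻ x in s, ENNReal.ofReal (l / 2) + A x ∂μ := lintegral_mono hsplit
      _ = ENNReal.ofReal (l / 2) * μ s + ∫⁻ x in s, A x ∂μ := by
          rw [lintegral_add_left measurable_const, setLIntegral_const]
  calc μ s = ENNReal.ofReal (2 / l) * (ENNReal.ofReal (l / 2) * μ s) := by
        rw [← mul_assoc, ← ENNReal.ofReal_mul (by positivity),
          show 2 / l * (l / 2) = 1 by field_simp, ENNReal.ofReal_one, one_mul]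
    _ ≤ _ := mul_le_mul_right
        (ENNReal.le_of_add_le_add_left (ENNReal.mul_ne_top ENNReal.ofReal_ne_top hfin) hdouble) _

end MeasureLemmas

section LpBounds

variable {α : Type*} [MeasurableSpace α] {μ : Measure α}

theorem lintegral_Ioi_rpow_mul_indicator_Iio {p : ℝ} (hp : 1 < p) {z : ℝ} (hz : 0 ≤ z) :
    ∫⁻ l in Ioi 0,
        ENNReal.ofReal (l ^ (p - 2)) * (Iio (2 * z)).indicator (fun _ => ENNReal.ofReal z) l =
      ENNReal.ofReal (2 ^ (p - 1) / (p - 1) * z ^ p) := by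
  have hpow : (2 * z) ^ (p - 1) / (p - 1) * z = 2 ^ (p - 1) / (p - 1) * z ^ p := by
    rw [Real.mul_rpow zero_le_two hz, show z ^ p = z ^ (p - 1) * z ^ (1 : ℝ) by
      rw [← Real.rpow_add' hz (by linarith), sub_add_cancel], Real.rpow_one]
    ring
  rw [lintegral_congr fun l =>
      (indicator_mul_right _ (fun l => ENNReal.ofReal (l ^ (p - 2))) _).symm,
    lintegral_indicator measurableSet_Iio, Measure.restrict_restrict measurableSet_Iio,
    Iio_inter_Ioi, lintegral_mul_const' _ _ ENNReal.ofReal_ne_top,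
    lintegral_Ioo_ofReal_rpow (by linarith) (by positivity), show p - 2 + 1 = p - 1 by ring,
    ← ENNReal.ofReal_mul (div_nonneg (by positivity) (by linarith)), hpow]

/-- Layer-cake formula for `|g|`, then Tonelli in `(l, x)`; the inner integral is
`∫_0^{2|f x|} l ^ (p - 2) dl = (2 |f x|) ^ (p - 1) / (p - 1)`. -/
theorem lintegral_rpow_abs_le_of_meas_lt_le [SFinite μ] {g f : α → ℝ} (hg : AEMeasurable g μ)
    (hf : Measurable f) {C p : ℝ} (hp : 1 < p)
    (hweak : ∀ l > 0, μ {x | l < |g x|} ≤ ENNReal.ofReal (C / l) *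
      ∫⁻ x, {y | l < 2 * |f y|}.indicator (fun y => ENNReal.ofReal |f y|) x ∂μ) :
    ∫⁻ x, ENNReal.ofReal (|g x| ^ p) ∂μ ≤
      ENNReal.ofReal (2 ^ (p - 1) * p * C / (p - 1)) * ∫⁻ x, ENNReal.ofReal (|f x| ^ p) ∂μ := by
  set A : ℝ → α → ℝ≥0∞ := fun l => {y | l < 2 * |f y|}.indicator fun y => ENNReal.ofReal |f y|
  have hA : Measurable (uncurry fun l x => ENNReal.ofReal (l ^ (p - 2)) * A l x) :=
    (measurable_fst.pow_const _).ennreal_ofReal.mul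
      ((hf.comp measurable_snd).abs.ennreal_ofReal.indicator
        (measurableSet_lt measurable_fst (measurable_const.mul (hf.comp measurable_snd).abs)))
  have hK : 0 ≤ 2 ^ (p - 1) / (p - 1) := div_nonneg (by positivity) (by linarith)
  calc ∫⁻ x, ENNReal.ofReal (|g x| ^ p) ∂μ
      = ENNReal.ofReal p * ∫⁻ l in Ioi 0, μ {x | l < |g x|} * ENNReal.ofReal (l ^ (p - 1)) :=
        lintegral_rpow_eq_lintegral_meas_lt_mul μ (ae_of_all _ fun x => abs_nonneg _) hg.abs
          (by linarith)
    _ ≤ ENNReal.ofReal p * ∫⁻ l in Ioi 0,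
          ENNReal.ofReal C * ∫⁻ x, ENNReal.ofReal (l ^ (p - 2)) * A l x ∂μ := by
        gcongr 1
        refine setLIntegral_mono' measurableSet_Ioi fun l (hl : 0 < l) => ?_
        calc μ {x | l < |g x|} * ENNReal.ofReal (l ^ (p - 1))
            ≤ ENNReal.ofReal (C / l) * (∫⁻ x, A l x ∂μ) * ENNReal.ofReal (l ^ (p - 1)) :=
              mul_le_mul_left (hweak l hl) _
          _ = ENNReal.ofReal C * ∫⁻ x, ENNReal.ofReal (l ^ (p - 2)) * A l x ∂μ := by
              rw [lintegral_const_mul' _ _ ENNReal.ofReal_ne_top, mul_right_comm,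
                ← ENNReal.ofReal_mul' (by positivity), ← mul_assoc,
                ← ENNReal.ofReal_mul' (by positivity), div_mul_eq_mul_div, mul_div_assoc,
                ← Real.rpow_sub_one hl.ne', show p - 1 - 1 = p - 2 by ring]
    _ = ENNReal.ofReal p * (ENNReal.ofReal C *
          ∫⁻ x, ENNReal.ofReal (2 ^ (p - 1) / (p - 1)) * ENNReal.ofReal (|f x| ^ p) ∂μ) := by
        rw [lintegral_const_mul' _ _ ENNReal.ofReal_ne_top,
          lintegral_lintegral_swap hA.aemeasurable]
        congr 2
        refine lintegral_congr fun x => ?_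
        rw [← ENNReal.ofReal_mul hK]
        exact lintegral_Ioi_rpow_mul_indicator_Iio hp (abs_nonneg (f x))
    _ = _ := by
        rw [lintegral_const_mul' _ _ ENNReal.ofReal_ne_top, ← mul_assoc, ← mul_assoc,
          ← ENNReal.ofReal_mul (by linarith), ← ENNReal.ofReal_mul' hK]
        congr 2
        ring

theorem integral_rpow_abs_rpow_le_of_lintegral_le {g f : α → ℝ} (hg : AEMeasurable g μ)
    (hf : AEMeasurable f μ) {p C : ℝ} (hp : 0 < p) (hC : 0 ≤ C)
    (hfin : ∫⁻ x, ENNReal.ofReal (|f x| ^ p) ∂μ ≠ ∞)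
    (h : ∫⁻ x, ENNReal.ofReal (|g x| ^ p) ∂μ ≤
      ENNReal.ofReal C * ∫⁻ x, ENNReal.ofReal (|f x| ^ p) ∂μ) :
    (∫ x, |g x| ^ p ∂μ) ^ (1 / p) ≤ C ^ (1 / p) * (∫ x, |f x| ^ p ∂μ) ^ (1 / p) := by
  rw [integral_eq_lintegral_of_nonneg_ae (ae_of_all _ fun x => by positivity)
      (hg.abs.pow_const p).aestronglyMeasurable,
    integral_eq_lintegral_of_nonneg_ae (ae_of_all _ fun x => by positivity)
      (hf.abs.pow_const p).aestronglyMeasurable, ← Real.mul_rpow hC ENNReal.toReal_nonneg]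
  refine Real.rpow_le_rpow ENNReal.toReal_nonneg ?_ (by positivity)
  simpa only [ENNReal.toReal_mul, ENNReal.toReal_ofReal hC]
    using ENNReal.toReal_mono (ENNReal.mul_ne_top ENNReal.ofReal_ne_top hfin) h

end LpBounds

section TreeOperator

variable {n : ℕ} {Γ : Type*} {a : Γ} {par : Γ → Γ} {Ωf Bset : Γ → Set (Euc n)} {f : Euc n → ℝ}

theorem subset_Wset (t : Γ) : Ωf t ⊆ Wset par Ωf t := subset_biUnion_of_mem (TreeLE.refl t)

theorem Wset_subset_Wset {s t : Γ} (h : TreeLE par s t) : Wset par Ωf t ⊆ Wset par Ωf s :=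
  biUnion_subset_biUnion_left fun _ hu => h.trans hu

theorem Wset_subset {Ω : Set (Euc n)} (hΩsub : ∀ t, Ωf t ⊆ Ω) (t : Γ) : Wset par Ωf t ⊆ Ω :=
  iUnion₂_subset fun s _ => hΩsub s

theorem measurableSet_Wset [Countable Γ] (hΩ : ∀ t, MeasurableSet (Ωf t)) (t : Γ) :
    MeasurableSet (Wset par Ωf t) :=
  .biUnion (to_countable _) fun s _ => hΩ s

theorem tsum_indicator_Wset_le {U : Set Γ} (hU : U.PairwiseDisjoint fun u => {s | TreeLE par u s})
    (x : Euc n) :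
    ∑' u : U, (Wset par Ωf u).indicator (1 : Euc n → ℝ≥0∞) x ≤ ∑' s, (Ωf s).indicator 1 x :=
  calc ∑' u : U, (Wset par Ωf u).indicator (1 : Euc n → ℝ≥0∞) x
      ≤ ∑' (u : U) (s : {s | TreeLE par u s}), (Ωf s).indicator (1 : Euc n → ℝ≥0∞) x := by
        refine ENNReal.tsum_le_tsum fun u => ?_
        by_cases hx : x ∈ Wset par Ωf u
        · obtain ⟨s, hs, hxs⟩ := mem_iUnion₂.1 hx
          rw [indicator_of_mem hx]
          exact (indicator_of_mem hxs (1 : Euc n → ℝ≥0∞)).symm.le.trans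
            (ENNReal.le_tsum (⟨s, hs⟩ : {s | TreeLE par u s}))
        · simp [hx]
    _ = ∑' s : ⋃ u ∈ U, {s | TreeLE par u s}, (Ωf s).indicator (1 : Euc n → ℝ≥0∞) x :=
        (ENNReal.tsum_biUnion' (f := fun s => (Ωf s).indicator 1 x) hU).symm
    _ ≤ ∑' s, (Ωf s).indicator 1 x :=
        ENNReal.tsum_comp_le_tsum_of_injective Subtype.val_injective _

theorem Tree_T_eq_tsum_indicator (x : Euc n) :
    Tree_T a par Ωf Bset f x =
      ∑' t : {t : Γ // t ≠ a}, (Bset t).indicator (fun _ => ⨍ y in Wset par Ωf t, |f y|) x := by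
  refine tsum_congr fun t => ?_
  by_cases hx : x ∈ Bset t <;> simp [hx, setAverage_eq, div_eq_inv_mul, Measure.real]

theorem measurable_Tree_T [Countable Γ] (hBmeas : ∀ t, t ≠ a → MeasurableSet (Bset t))
    (hBdisj : Pairwise (Disjoint on fun t : {t : Γ // t ≠ a} => Bset t)) :
    Measurable (Tree_T a par Ωf Bset f) := by
  simp_rw [funext Tree_T_eq_tsum_indicator]
  exact measurable_tsum_of_summable (fun t => measurable_const.indicator (hBmeas t t.2))
    (summable_indicator_of_pairwiseDisjoint hBdisj _)

theorem setOf_lt_abs_Tree_T_subset (hBsub : ∀ t, t ≠ a → Bset t ⊆ Ωf t)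
    (hBdisj : Pairwise (Disjoint on fun t : {t : Γ // t ≠ a} => Bset t)) {l : ℝ} (hl : 0 ≤ l) :
    {x | l < |Tree_T a par Ωf Bset f x|} ⊆
      ⋃ t ∈ {t | l < ⨍ y in Wset par Ωf t, |f y|}, Wset par Ωf t := by
  intro x (hx : l < |Tree_T a par Ωf Bset f x|)
  rw [Tree_T_eq_tsum_indicator] at hx
  by_cases h : ∃ t : {t : Γ // t ≠ a}, x ∈ Bset t
  · obtain ⟨t, ht⟩ := h
    rw [(hasSum_indicator_of_mem hBdisj _ ht).tsum_eq, abs_of_nonneg (by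
      rw [setAverage_eq]
      exact smul_nonneg (inv_nonneg.2 measureReal_nonneg)
        (integral_nonneg fun y => abs_nonneg (f y)))] at hx
    exact mem_biUnion hx (subset_Wset (par := par) t.1 (hBsub t t.2 ht))
  · push Not at h
    simp only [indicator_of_notMem (h _), tsum_zero, abs_zero] at hx
    exact absurd hl hx.not_ge

theorem Tree_T_congr_ae {Ω : Set (Euc n)} (hΩsub : ∀ t, Ωf t ⊆ Ω) {g : Euc n → ℝ}
    (hfg : f =ᵐ[volume.restrict Ω] g) : Tree_T a par Ωf Bset f = Tree_T a par Ωf Bset g := by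
  ext x
  refine tsum_congr fun t => congrArg _ (integral_congr_ae ?_)
  filter_upwards [ae_restrict_of_ae_restrict_of_subset (Wset_subset hΩsub t) hfg] with y hy
  rw [hy]

theorem volume_restrict_lt_abs_Tree_T_le [Countable Γ] {Ω : Set (Euc n)}
    (hΩmeas : ∀ t, MeasurableSet (Ωf t)) (hΩsub : ∀ t, Ωf t ⊆ Ω)
    (hreach : ∀ t, TreeLE par a t) (hBsub : ∀ t, t ≠ a → Bset t ⊆ Ωf t)
    (hBdisj : Pairwise (Disjoint on fun t : {t : Γ // t ≠ a} => Bset t)) {N : ℝ}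
    (hN : ∀ᵐ x ∂volume.restrict Ω, ∑' t, (Ωf t).indicator 1 x ≤ ENNReal.ofReal N)
    (hf : Measurable f) {l : ℝ} (hl : 0 < l) :
    volume.restrict Ω {x | l < |Tree_T a par Ωf Bset f x|} ≤ ENNReal.ofReal (2 * N / l) *
      ∫⁻ x in Ω, {y | l < 2 * |f y|}.indicator (fun y => ENNReal.ofReal |f y|) x := by
  set A := {y | l < 2 * |f y|}.indicator fun y => ENNReal.ofReal |f y|
  have hA : Measurable A :=
    hf.abs.ennreal_ofReal.indicator
      (measurableSet_lt measurable_const (measurable_const.mul hf.abs))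
  obtain ⟨U, hUS, hcov, hU⟩ := TreeLE.exists_subset_pairwiseDisjoint_subtrees hreach
    {t | l < ⨍ y in Wset par Ωf t, |f y|}
  have hsub : {x | l < |Tree_T a par Ωf Bset f x|} ⊆ ⋃ u : U, Wset par Ωf u := by
    refine (setOf_lt_abs_Tree_T_subset hBsub hBdisj hl.le).trans (iUnion₂_subset fun t ht => ?_)
    obtain ⟨u, hu, hut⟩ := hcov t ht
    exact (Wset_subset_Wset hut).trans (subset_iUnion_of_subset ⟨u, hu⟩ subset_rfl)
  calc volume.restrict Ω {x | l < |Tree_T a par Ωf Bset f x|}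
      ≤ ∑' u : U, volume (Wset par Ωf u) :=
        (Measure.restrict_apply_le _ _).trans ((measure_mono hsub).trans (measure_iUnion_le _))
    _ ≤ ∑' u : U, ENNReal.ofReal (2 / l) * ∫⁻ x in Wset par Ωf u, A x :=
        ENNReal.tsum_le_tsum fun u => measure_le_of_lt_setAverage_abs hl (hUS u.2)
    _ = ENNReal.ofReal (2 / l) * ∑' u : U, ∫⁻ x in Wset par Ωf u, A x ∂volume.restrict Ω := by
        simp_rw [ENNReal.tsum_mul_left, Measure.restrict_restrict_of_subset (Wset_subset hΩsub _)]
    _ ≤ ENNReal.ofReal (2 / l) * (ENNReal.ofReal N * ∫⁻ x in Ω, A x) := by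
        gcongr
        exact tsum_setLIntegral_le_of_tsum_indicator_le (s := fun u : U => Wset par Ωf u)
          (fun u => measurableSet_Wset hΩmeas u)
          hA.aemeasurable (hN.mono fun x hx => (tsum_indicator_Wset_le hU x).trans hx)
    _ = ENNReal.ofReal (2 * N / l) * ∫⁻ x in Ω, A x := by
        rw [← mul_assoc, ← ENNReal.ofReal_mul (by positivity), div_mul_eq_mul_div, mul_comm 2 N]

theorem lintegral_rpow_abs_Tree_T_le [Countable Γ] {Ω : Set (Euc n)}
    (hΩmeas : ∀ t, MeasurableSet (Ωf t)) (hΩsub : ∀ t, Ωf t ⊆ Ω)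
    (hreach : ∀ t, TreeLE par a t) (hBmeas : ∀ t, t ≠ a → MeasurableSet (Bset t))
    (hBsub : ∀ t, t ≠ a → Bset t ⊆ Ωf t)
    (hBdisj : Pairwise (Disjoint on fun t : {t : Γ // t ≠ a} => Bset t)) {N : ℝ}
    (hN : ∀ᵐ x ∂volume.restrict Ω, ∑' t, (Ωf t).indicator 1 x ≤ ENNReal.ofReal N)
    (hf : Measurable f) {p : ℝ} (hp : 1 < p) :
    ∫⁻ x in Ω, ENNReal.ofReal (|Tree_T a par Ωf Bset f x| ^ p) ≤
      ENNReal.ofReal (2 ^ p * (p * N / (p - 1))) * ∫⁻ x in Ω, ENNReal.ofReal (|f x| ^ p) := by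
  convert lintegral_rpow_abs_le_of_meas_lt_le (measurable_Tree_T hBmeas hBdisj).aemeasurable hf hp
    fun l hl => volume_restrict_lt_abs_Tree_T_le hΩmeas hΩsub hreach hBsub hBdisj hN hf hl using 3
  rw [Real.rpow_sub_one two_ne_zero]
  ring

end TreeOperator

theorem T_strong_pp_general
    (n : ℕ) (Γ : Type*) [Countable Γ]
    (Ω : Set (Euc n))
    (a : Γ) (par : Γ → Γ)
    (hreach : ∀ t : Γ, ∃ k : ℕ, par^[k] t = a)
    (Ωf : Γ → Set (Euc n)) (hΩopen : ∀ t, IsOpen (Ωf t)) (hΩsub : ∀ t, Ωf t ⊆ Ω)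
    (N : ℝ)
    (hcover : ∀ᵐ x ∂(volume.restrict Ω),
      1 ≤ ∑' t : Γ, Set.indicator (Ωf t) (fun _ => (1:ℝ)) x ∧
      ∑' t : Γ, Set.indicator (Ωf t) (fun _ => (1:ℝ)) x ≤ N)
    (Bset : Γ → Set (Euc n))
    (hBmeas : ∀ t, t ≠ a → MeasurableSet (Bset t))
    (hBsub : ∀ t, t ≠ a → Bset t ⊆ Ωf t ∩ Ωf (par t))
    (hBdisj : ∀ s t : Γ, s ≠ a → t ≠ a → s ≠ t → Disjoint (Bset s) (Bset t))
    (p : ℝ) (hp : 1 < p) :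
    ∀ f : Euc n → ℝ, MemLp f (ENNReal.ofReal p) (volume.restrict Ω) →
      (∫ x in Ω, |Tree_T a par Ωf Bset f x| ^ p) ^ (1/p) ≤
        2 * (p * N / (p - 1)) ^ (1/p) * (∫ x in Ω, |f x| ^ p) ^ (1/p) := by
  intro f hf
  obtain ⟨g, hg, hfg⟩ := hf.1.aemeasurable
  have hp0 : 0 < p := by linarith
  rcases eq_or_ne (volume.restrict Ω) 0 with hΩ | hΩ
  · simp [hΩ, hp0.ne']
  have hpN : 0 ≤ p * N / (p - 1) := by
    have := ae_neBot.2 hΩ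
    obtain ⟨x, h1, h2⟩ := hcover.exists
    exact div_nonneg (mul_nonneg hp0.le (by linarith)) (by linarith)
  have hgp : ∫⁻ x in Ω, ENNReal.ofReal (|g x| ^ p) ≠ ∞ := by
    simpa [Real.norm_eq_abs, hp0.le] using ((hf.ae_eq hfg).integrable_norm_rpow
      (by simpa using hp0) ENNReal.ofReal_ne_top).lintegral_lt_top.ne
  have hBdisj' : Pairwise (Disjoint on fun t : {t : Γ // t ≠ a} => Bset t) :=
    fun s t hst => hBdisj s t s.2 t.2 (Subtype.coe_ne_coe.2 hst)
  have hTg := lintegral_rpow_abs_Tree_T_le (fun t => (hΩopen t).measurableSet) hΩsub hreach hBmeas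
    (fun t ht => (hBsub t ht).trans inter_subset_left) hBdisj'
    (hcover.mono fun x hx => tsum_indicator_one_le_ofReal hx.1 hx.2) hg hp
  rw [Tree_T_congr_ae hΩsub hfg,
    integral_congr_ae (hfg.mono fun x hx => congrArg (fun y => |y| ^ p) hx)]
  calc _ ≤ (2 ^ p * (p * N / (p - 1))) ^ (1 / p) * (∫ x in Ω, |g x| ^ p) ^ (1 / p) :=
        integral_rpow_abs_rpow_le_of_lintegral_le (measurable_Tree_T hBmeas hBdisj').aemeasurable
          hg.aemeasurable hp0 (by positivity) hgp hTg
    _ = _ := by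
        rw [Real.mul_rpow (by positivity) hpN,
          ← Real.rpow_mul zero_le_two, mul_one_div_cancel hp0.ne', Real.rpow_one]

theorem T_strong_pp
    (n : ℕ) (Γ : Type*) [Countable Γ]
    (Ω : Set (Euc n)) (hopen : IsOpen Ω) (hconn : IsConnected Ω)
    (hbdd : Bornology.IsBounded Ω)
    (a : Γ) (par : Γ → Γ)
    (hreach : ∀ t : Γ, ∃ k : ℕ, par^[k] t = a)
    (Ωf : Γ → Set (Euc n)) (hΩopen : ∀ t, IsOpen (Ωf t)) (hΩsub : ∀ t, Ωf t ⊆ Ω)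
    (N : ℝ)
    (hcover : ∀ᵐ x ∂(volume.restrict Ω),
      1 ≤ ∑' t : Γ, Set.indicator (Ωf t) (fun _ => (1:ℝ)) x ∧
      ∑' t : Γ, Set.indicator (Ωf t) (fun _ => (1:ℝ)) x ≤ N)
    (Bset : Γ → Set (Euc n))
    (hBmeas : ∀ t, t ≠ a → MeasurableSet (Bset t))
    (hBsub : ∀ t, t ≠ a → Bset t ⊆ Ωf t ∩ Ωf (par t))
    (hBpos : ∀ t, t ≠ a → 0 < volume (Bset t))
    (hBdisj : ∀ s t : Γ, s ≠ a → t ≠ a → s ≠ t → Disjoint (Bset s) (Bset t))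
    (p : ℝ) (hp : 1 < p) :
    ∀ f : Euc n → ℝ, MemLp f (ENNReal.ofReal p) (volume.restrict Ω) →
      (∫ x in Ω, |Tree_T a par Ωf Bset f x| ^ p) ^ (1/p) ≤
        2 * (p * N / (p - 1)) ^ (1/p) * (∫ x in Ω, |f x| ^ p) ^ (1/p) :=
  T_strong_pp_general n Γ Ω a par hreach Ωf hΩopen hΩsub N hcover Bset hBmeas hBsub hBdisj p hp
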